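/- arXiv:2206.05829 — 4 statements merged into one kernel-verified Lean document; each statement's English description precedes it below -/
import Mathlib

section
/- In any graphoid, if U ∈ t_j(S) (i.e., U ⊆ S and j ⫫ (S \ U) | U), then the relative Markov boundary of j with respect to U equals the relative Markov boundary of j with respect to S: m(j;U) = m(j;S). -/
/-- An abstract graphoid over a ground type `V`: a ternary relation on subsets
satisfying triviality, symmetry, decomposition, weak union, contraction, intersection. -/
structure Graphoid (V : Type*) where
  ind : Set V → Set V → Set V → Prop
  triv : ∀ A C, ind A ∅ C
  symm : ∀ A B C, ind A B C → ind B A C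
  decomp : ∀ A B D C, ind A (B ∪ D) C → ind A B C ∧ ind A D C
  weakUnion : ∀ A B D C, ind A (B ∪ D) C → ind A B (C ∪ D)
  contr : ∀ A B D C, ind A B C → ind A D (B ∪ C) → ind A (B ∪ D) C
  inter : ∀ A B C D, ind A B (C ∪ D) → ind A C (B ∪ D) → ind A (B ∪ C) D

/-- The collection of relative Markov blankets of `j` within `S`. -/
def Graphoid.tset {V : Type*} (I : Graphoid V) (j : V) (S : Set V) : Set (Set V) :=
  {U | U ⊆ S ∧ I.ind {j} (S \ U) U}

/-- The relative Markov boundary of `j` with respect to `S`. -/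
def Graphoid.mb {V : Type*} (I : Graphoid V) (j : V) (S : Set V) : Set V :=
  ⋂₀ I.tset j S

/-! Contraction shows that a blanket of `j` within `U` is already a blanket within `S`, so
`t_j(U) ⊆ t_j(S)`. Conversely, intersection shows that `W ∩ U ∈ t_j(U)` for every `W ∈ t_j(S)`;
hence every member of `t_j(S)` contains a member of `t_j(U)`, and the two intersections agree. -/

namespace Graphoid

variable {V : Type*} (I : Graphoid V)

theorem ind_of_subset {A B B' C : Set V} (h : I.ind A B C) (hB : B' ⊆ B) : I.ind A B' C :=
  (I.decomp A B' (B \ B') C (by rwa [Set.union_sdiff_cancel hB])).1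

theorem tset_subset_tset_of_mem {j : V} {S U : Set V} (hU : U ∈ I.tset j S) :
    I.tset j U ⊆ I.tset j S := by
  obtain ⟨hUS, hSU⟩ := hU
  rintro W ⟨hWU, hUW⟩
  refine ⟨hWU.trans hUS, ?_⟩
  have hSW : S \ W = (U \ W) ∪ (S \ U) := by
    ext x; simp only [Set.mem_union, Set.mem_sdiff]
    by_cases hx : x ∈ U <;> tauto
  rw [hSW]
  exact I.contr {j} (U \ W) (S \ U) W hUW (by rwa [Set.sdiff_union_of_subset hWU])

theorem inter_mem_tset_of_mem_tset {j : V} {S U W : Set V} (hU : U ∈ I.tset j S)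
    (hW : W ∈ I.tset j S) : W ∩ U ∈ I.tset j U := by
  obtain ⟨hUS, hSU⟩ := hU
  obtain ⟨hWS, hSW⟩ := hW
  refine ⟨Set.inter_subset_right, ?_⟩
  have hWU : I.ind {j} (W \ U) ((U \ W) ∪ (W ∩ U)) := by
    rw [Set.inter_comm, Set.sdiff_union_inter]
    exact I.ind_of_subset hSU (Set.sdiff_subset_sdiff_left hWS)
  have hUW : I.ind {j} (U \ W) ((W \ U) ∪ (W ∩ U)) := by
    rw [Set.sdiff_union_inter]
    exact I.ind_of_subset hSW (Set.sdiff_subset_sdiff_left hUS)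
  rw [Set.sdiff_inter_self_eq_sdiff]
  exact (I.decomp {j} (W \ U) (U \ W) (W ∩ U) (I.inter {j} _ _ _ hWU hUW)).2

end Graphoid

theorem mb_of_mem_tset_general {V : Type*} (I : Graphoid V) (j : V) (S U : Set V)
    (hU : U ∈ I.tset j S) :
    I.mb j U = I.mb j S := by
  refine Set.Subset.antisymm (fun x hx W hW => ?_) ?_
  · exact (Set.sInter_subset_of_mem (I.inter_mem_tset_of_mem_tset hU hW) hx).1
  · exact Set.sInter_subset_sInter (I.tset_subset_tset_of_mem hU)

/-- If `U ∈ t_j(S)` then `m(j;U) = m(j;S)`. -/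
theorem mb_of_mem_tset {V : Type*} (I : Graphoid V) (j : V) (S U : Set V)
    (hS : S ⊆ {j}ᶜ) (hU : U ∈ I.tset j S) :
    I.mb j U = I.mb j S :=
  mb_of_mem_tset_general I j S U hU
end

section
/- In a compositional graphoid, the infimum (intersection of all elements) of the neighbourhood lattice T_j(S) equals the relative Markov boundary m(j;S). -/
/-- A compositional graphoid: a graphoid additionally satisfying composition. -/
structure CompGraphoid (V : Type*) extends Graphoid V where
  comp : ∀ A B D C, ind A B C → ind A D C → ind A (B ∪ D) C

def CompGraphoid.mb {V : Type*} (I : CompGraphoid V) (j : V) (S : Set V) : Set V :=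
  I.toGraphoid.mb j S

/-- The neighbourhood lattice of `j` relative to `S`. -/
def CompGraphoid.nlat {V : Type*} (I : CompGraphoid V) (j : V) (S : Set V) : Set (Set V) :=
  {U | U ⊆ {j}ᶜ ∧ I.mb j U = I.mb j S}

/-!
Every relative blanket `W` of `S` has the same Markov boundary as `S`: a blanket of `W` is a
blanket of `S` by contraction, and for a blanket `U` of `S` the intersection property makes
`U ∩ W` a blanket of `S`, hence of `W`. So all blankets of `S` lie in the neighbourhood lattice,
whose intersection is therefore inside `mb j S`; conversely each member `U` of the lattice
contains `mb j U = mb j S`.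
-/

namespace Graphoid

variable {V : Type*} (I : Graphoid V)

theorem ind_union_inter_of_ind {A X Y M R : Set V}
    (hXM : I.ind A (Y ∪ R) (X ∪ M)) (hYM : I.ind A (X ∪ R) (Y ∪ M)) :
    I.ind A ((X ∪ Y) ∪ R) M := by
  have hXY : I.ind A (X ∪ Y) M :=
    I.inter A X Y M (I.decomp A X R (Y ∪ M) hYM).1 (I.decomp A Y R (X ∪ M) hXM).1
  have hR : I.ind A R ((X ∪ Y) ∪ M) := by
    rw [Set.union_right_comm]
    exact I.weakUnion A R Y (X ∪ M) (Set.union_comm Y R ▸ hXM)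
  exact I.contr A (X ∪ Y) R M hXY hR

theorem self_mem_tset (j : V) (S : Set V) : S ∈ I.tset j S :=
  ⟨subset_rfl, Set.sdiff_self (s := S) ▸ I.triv {j} S⟩

theorem mb_subset (j : V) (S : Set V) : I.mb j S ⊆ S :=
  Set.sInter_subset_of_mem (I.self_mem_tset j S)

variable {I} {j : V} {S W U : Set V}

theorem mem_tset_of_subset (hWS : W ⊆ S) (hU : U ∈ I.tset j S) (hUW : U ⊆ W) :
    U ∈ I.tset j W :=
  ⟨hUW, I.ind_of_subset hU.2 (Set.sdiff_subset_sdiff_left hWS)⟩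

theorem tset_trans (hW : W ∈ I.tset j S) (hU : U ∈ I.tset j W) : U ∈ I.tset j S := by
  refine ⟨hU.1.trans hW.1, ?_⟩
  have h := I.contr {j} (W \ U) (S \ W) U hU.2 (by rw [Set.sdiff_union_of_subset hU.1]; exact hW.2)
  rwa [Set.union_comm, Set.sdiff_union_sdiff_cancel hW.1 hU.1] at h

theorem inter_mem_tset (hU : U ∈ I.tset j S) (hW : W ∈ I.tset j S) : U ∩ W ∈ I.tset j S := by
  obtain ⟨hUS, hUi⟩ := hU
  obtain ⟨hWS, hWi⟩ := hW
  refine ⟨Set.inter_subset_left.trans hUS, ?_⟩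
  have hU' : I.ind {j} (W \ U ∪ S \ (U ∪ W)) (U \ W ∪ U ∩ W) := by
    convert hUi using 1
    · ext x; have := @hWS x; simp only [Set.mem_union, Set.mem_sdiff]; tauto
    · exact Set.sdiff_union_inter U W
  have hW' : I.ind {j} (U \ W ∪ S \ (U ∪ W)) (W \ U ∪ U ∩ W) := by
    convert hWi using 1
    · ext x; have := @hUS x; simp only [Set.mem_union, Set.mem_sdiff]; tauto
    · rw [Set.inter_comm]; exact Set.sdiff_union_inter W U
  convert I.ind_union_inter_of_ind hU' hW' using 1
  ext x; have := @hUS x; have := @hWS x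
  simp only [Set.mem_union, Set.mem_sdiff, Set.mem_inter_iff]; tauto

theorem mb_eq_of_mem_tset (hW : W ∈ I.tset j S) : I.mb j W = I.mb j S := by
  refine subset_antisymm (Set.subset_sInter fun U hU => ?_)
    (Set.sInter_subset_sInter fun U hU => tset_trans hW hU)
  have hUW : U ∩ W ∈ I.tset j W :=
    mem_tset_of_subset hW.1 (inter_mem_tset hU hW) Set.inter_subset_right
  exact (Set.sInter_subset_of_mem hUW).trans Set.inter_subset_left

end Graphoid

/-- The infimum of the neighbourhood lattice equals the relative Markov boundary. -/
theorem nlat_sInter_eq_mb {V : Type*} (I : CompGraphoid V) (j : V) (S : Set V)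
    (hS : S ⊆ {j}ᶜ) :
    ⋂₀ I.nlat j S = I.mb j S := by
  apply subset_antisymm
  · exact Set.sInter_subset_sInter fun W hW =>
      ⟨hW.1.trans hS, Graphoid.mb_eq_of_mem_tset hW⟩
  · exact Set.subset_sInter fun U hU => hU.2 ▸ I.mb_subset j U
end

section
/- Let H be a Hilbert space, A ∈ B(H) a bounded operator, and P an orthogonal projection on H. Then the set Q(A,P) = {Q : Q is an orthogonal projection on H with QA = PA} is a complete convex sublattice of the projection lattice of H: it is closed under arbitrary meets and joins of its elements, and if Q1 ≤ R ≤ Q2 with Q1, Q2 ∈ Q(A,P) and R an orthogonal projection, then R ∈ Q(A,P). -/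
/-!
For an idempotent `Q`, the equation `Q * A = B` says exactly that `Q` fixes `range B` and kills
`range (A - B)`. When `Q` is an orthogonal projection its kernel is `(range Q)ᗮ`, so `Q * A = P * A`
means `range (P * A) ≤ range Q ≤ (range (A - P * A))ᗮ`. Since `Q ↦ range Q` identifies the
projection lattice with the lattice of closed subspaces, `Q(A,P)` corresponds to an interval with
closed upper end, and intervals are complete convex sublattices.
-/

/-- An orthogonal projection: a self-adjoint idempotent bounded operator. -/
def IsOrthProj {H : Type*} [NormedAddCommGroup H] [InnerProductSpace ℂ H]
    [CompleteSpace H] (P : H →L[ℂ] H) : Prop :=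
  IsSelfAdjoint P ∧ IsIdempotentElem P

/-- The order on the projection lattice: `P ≤ Q` iff `P * Q = P`. -/
def ProjLE {H : Type*} [NormedAddCommGroup H] [InnerProductSpace ℂ H]
    [CompleteSpace H] (P Q : H →L[ℂ] H) : Prop :=
  P * Q = P

open ContinuousLinearMap

namespace ContinuousLinearMap

theorem IsIdempotentElem.mul_eq_iff_range_le_and_range_sub_le_ker {R M : Type*} [Ring R]
    [TopologicalSpace M] [AddCommGroup M] [Module R M] [IsTopologicalAddGroup M]
    {Q A B : M →L[R] M} (hQ : IsIdempotentElem Q) :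
    Q * A = B ↔ B.range ≤ Q.range ∧ (A - B).range ≤ Q.ker := by
  have hfix : ∀ {x}, x ∈ Q.range → Q x = x := fun hx =>
    (LinearMap.IsIdempotentElem.mem_range_iff hQ.toLinearMap).mp hx
  constructor
  · rintro rfl
    refine ⟨LinearMap.range_comp_le_range _ _, ?_⟩
    rintro _ ⟨x, rfl⟩
    simp [hfix (x := Q (A x)) ⟨A x, rfl⟩]
  · rintro ⟨hB, hAB⟩
    ext x
    have h := hAB ⟨x, rfl⟩
    simp only [LinearMap.mem_ker, coe_coe, sub_apply, map_sub, sub_eq_zero] at h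
    exact h.trans (hfix (hB ⟨x, rfl⟩))

variable {𝕜 E : Type*} [RCLike 𝕜] [NormedAddCommGroup E] [InnerProductSpace 𝕜 E] [CompleteSpace E]

theorem IsStarProjection.ker_eq_orthogonal_range {Q : E →L[𝕜] E} (hQ : IsStarProjection Q) :
    Q.ker = Q.rangeᗮ := by
  rw [orthogonal_range, hQ.isSelfAdjoint.adjoint_eq]

theorem IsStarProjection.mul_eq_iff {Q A B : E →L[𝕜] E} (hQ : IsStarProjection Q) :
    Q * A = B ↔ B.range ≤ Q.range ∧ Q.range ≤ (A - B).rangeᗮ := by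
  rw [hQ.isIdempotentElem.mul_eq_iff_range_le_and_range_sub_le_ker, hQ.ker_eq_orthogonal_range,
    ← Submodule.isOrtho_iff_le, Submodule.isOrtho_comm, Submodule.isOrtho_iff_le]

theorem IsStarProjection.mul_eq_left_iff {p q : E →L[𝕜] E} (hp : IsStarProjection p)
    (hq : IsStarProjection q) : p * q = p ↔ p.range ≤ q.range := by
  have hstar : p * q = p ↔ q * p = p := by
    constructor <;> intro h <;> simpa [star_mul, hp.isSelfAdjoint.star_eq,
      hq.isSelfAdjoint.star_eq] using congrArg star h
  rw [hstar, ← LinearMap.IsIdempotentElem.comp_eq_right_iff hq.isIdempotentElem.toLinearMap,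
    ← toLinearMap_comp, mul_def, coe_inj]

end ContinuousLinearMap

theorem exists_isStarProjection_range_eq {𝕜 E : Type*} [RCLike 𝕜] [NormedAddCommGroup E]
    [InnerProductSpace 𝕜 E] [CompleteSpace E] {K : Submodule 𝕜 E} (hK : IsClosed (K : Set E)) :
    ∃ p : E →L[𝕜] E, IsStarProjection p ∧ p.range = K :=
  have := hK.completeSpace_coe
  ⟨K.starProjection, isStarProjection_starProjection, K.range_starProjection⟩

section OrthProj

variable {H : Type*} [NormedAddCommGroup H] [InnerProductSpace ℂ H] [CompleteSpace H]

theorem isOrthProj_iff_isStarProjection {P : H →L[ℂ] H} : IsOrthProj P ↔ IsStarProjection P :=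
  ⟨fun h => ⟨h.2, h.1⟩, fun h => ⟨h.isSelfAdjoint, h.isIdempotentElem⟩⟩

theorem IsOrthProj.isClosed_range {P : H →L[ℂ] H} (hP : IsOrthProj P) :
    IsClosed (P.range : Set H) :=
  hP.2.isClosed_range

theorem exists_isOrthProj_range_eq {K : Submodule ℂ H} (hK : IsClosed (K : Set H)) :
    ∃ p : H →L[ℂ] H, IsOrthProj p ∧ p.range = K :=
  (exists_isStarProjection_range_eq hK).imp fun _ =>
    And.imp_left isOrthProj_iff_isStarProjection.mpr

theorem projLE_iff_range_le {p q : H →L[ℂ] H} (hp : IsOrthProj p) (hq : IsOrthProj q) :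
    ProjLE p q ↔ p.range ≤ q.range :=
  (isOrthProj_iff_isStarProjection.mp hp).mul_eq_left_iff (isOrthProj_iff_isStarProjection.mp hq)

theorem isOrthProj_and_mul_eq_iff {Q A B : H →L[ℂ] H} :
    IsOrthProj Q ∧ Q * A = B ↔ IsOrthProj Q ∧ B.range ≤ Q.range ∧ Q.range ≤ (A - B).rangeᗮ :=
  and_congr_right fun hQ => (isOrthProj_iff_isStarProjection.mp hQ).mul_eq_iff

variable {V W : Submodule ℂ H} {𝒮 : Set (H →L[ℂ] H)}

theorem exists_projLE_inf_of_range_mem_Icc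
    (h𝒮 : ∀ q ∈ 𝒮, IsOrthProj q ∧ V ≤ q.range ∧ q.range ≤ W) (hne : 𝒮.Nonempty) :
    ∃ p, (IsOrthProj p ∧ V ≤ p.range ∧ p.range ≤ W) ∧ (∀ Q ∈ 𝒮, ProjLE p Q) ∧
      ∀ R, IsOrthProj R → (∀ Q ∈ 𝒮, ProjLE R Q) → ProjLE R p := by
  obtain ⟨Q₀, hQ₀⟩ := hne
  have hclosed : IsClosed ((⨅ q ∈ 𝒮, q.range : Submodule ℂ H) : Set H) := by
    simp only [Submodule.coe_iInf]
    exact isClosed_biInter fun q hq => (h𝒮 q hq).1.isClosed_range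
  obtain ⟨p, hp, hpr⟩ := exists_isOrthProj_range_eq hclosed
  refine ⟨p, ⟨hp, ?_, ?_⟩, fun Q hQ => ?_, fun R hR hRle => ?_⟩
  · exact hpr ▸ le_iInf₂ fun q hq => (h𝒮 q hq).2.1
  · exact hpr ▸ (iInf₂_le Q₀ hQ₀).trans (h𝒮 Q₀ hQ₀).2.2
  · exact (projLE_iff_range_le hp (h𝒮 Q hQ).1).mpr (hpr ▸ iInf₂_le Q hQ)
  · exact (projLE_iff_range_le hR hp).mpr
      (hpr ▸ le_iInf₂ fun q hq => (projLE_iff_range_le hR (h𝒮 q hq).1).mp (hRle q hq))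

theorem exists_projLE_sup_of_range_mem_Icc (hW : IsClosed (W : Set H))
    (h𝒮 : ∀ q ∈ 𝒮, IsOrthProj q ∧ V ≤ q.range ∧ q.range ≤ W) (hne : 𝒮.Nonempty) :
    ∃ p, (IsOrthProj p ∧ V ≤ p.range ∧ p.range ≤ W) ∧ (∀ Q ∈ 𝒮, ProjLE Q p) ∧
      ∀ R, IsOrthProj R → (∀ Q ∈ 𝒮, ProjLE Q R) → ProjLE p R := by
  obtain ⟨Q₀, hQ₀⟩ := hne
  obtain ⟨p, hp, hpr⟩ := exists_isOrthProj_range_eq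
    (⨆ q ∈ 𝒮, q.range : Submodule ℂ H).isClosed_topologicalClosure
  have hle : ∀ Q ∈ 𝒮, Q.range ≤ p.range := fun Q hQ =>
    hpr ▸ (le_iSup₂ (f := fun q _ => q.range) Q hQ).trans (Submodule.le_topologicalClosure _)
  refine ⟨p, ⟨hp, ?_, ?_⟩, fun Q hQ => ?_, fun R hR hRle => ?_⟩
  · exact (h𝒮 Q₀ hQ₀).2.1.trans (hle Q₀ hQ₀)
  · exact hpr ▸ Submodule.topologicalClosure_minimal _ (iSup₂_le fun q hq => (h𝒮 q hq).2.2) hW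
  · exact (projLE_iff_range_le (h𝒮 Q hQ).1 hp).mpr (hle Q hQ)
  · exact (projLE_iff_range_le hp hR).mpr (hpr ▸ Submodule.topologicalClosure_minimal _
      (iSup₂_le fun q hq => (projLE_iff_range_le (h𝒮 q hq).1 hR).mp (hRle q hq))
      hR.isClosed_range)

end OrthProj

theorem QAP_complete_convex_sublattice_general {H : Type*} [NormedAddCommGroup H]
    [InnerProductSpace ℂ H] [CompleteSpace H]
    (A P : H →L[ℂ] H) :
    (∀ 𝒮 : Set (H →L[ℂ] H),
      𝒮 ⊆ {Q | IsOrthProj Q ∧ Q * A = P * A} → 𝒮.Nonempty →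
      (∃ Qinf ∈ {Q | IsOrthProj Q ∧ Q * A = P * A},
        (∀ Q ∈ 𝒮, ProjLE Qinf Q) ∧
        ∀ R : H →L[ℂ] H, IsOrthProj R → (∀ Q ∈ 𝒮, ProjLE R Q) → ProjLE R Qinf) ∧
      (∃ Qsup ∈ {Q | IsOrthProj Q ∧ Q * A = P * A},
        (∀ Q ∈ 𝒮, ProjLE Q Qsup) ∧
        ∀ R : H →L[ℂ] H, IsOrthProj R → (∀ Q ∈ 𝒮, ProjLE Q R) → ProjLE Qsup R)) ∧
    (∀ Q₁ Q₂ R : H →L[ℂ] H,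
      (IsOrthProj Q₁ ∧ Q₁ * A = P * A) → (IsOrthProj Q₂ ∧ Q₂ * A = P * A) →
      IsOrthProj R → ProjLE Q₁ R → ProjLE R Q₂ →
      IsOrthProj R ∧ R * A = P * A) := by
  simp only [Set.subset_def, Set.mem_ofPred_eq, isOrthProj_and_mul_eq_iff]
  refine ⟨fun 𝒮 h𝒮 hne => ⟨exists_projLE_inf_of_range_mem_Icc h𝒮 hne,
    exists_projLE_sup_of_range_mem_Icc (Submodule.isClosed_orthogonal _) h𝒮 hne⟩, ?_⟩
  rintro Q₁ Q₂ R ⟨hQ₁, hV₁, -⟩ ⟨hQ₂, -, hW₂⟩ hR h₁ h₂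
  exact ⟨hR, hV₁.trans ((projLE_iff_range_le hQ₁ hR).mp h₁),
    ((projLE_iff_range_le hR hQ₂).mp h₂).trans hW₂⟩

/-- `Q(A,P) = {Q orth. projection : Q A = P A}` is a complete convex sublattice of the
projection lattice: closed under arbitrary meets and joins, and convex. -/
theorem QAP_complete_convex_sublattice {H : Type*} [NormedAddCommGroup H]
    [InnerProductSpace ℂ H] [CompleteSpace H]
    (A P : H →L[ℂ] H) (hP : IsOrthProj P) :
    (∀ 𝒮 : Set (H →L[ℂ] H),
      𝒮 ⊆ {Q | IsOrthProj Q ∧ Q * A = P * A} → 𝒮.Nonempty →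
      (∃ Qinf ∈ {Q | IsOrthProj Q ∧ Q * A = P * A},
        (∀ Q ∈ 𝒮, ProjLE Qinf Q) ∧
        ∀ R : H →L[ℂ] H, IsOrthProj R → (∀ Q ∈ 𝒮, ProjLE R Q) → ProjLE R Qinf) ∧
      (∃ Qsup ∈ {Q | IsOrthProj Q ∧ Q * A = P * A},
        (∀ Q ∈ 𝒮, ProjLE Q Qsup) ∧
        ∀ R : H →L[ℂ] H, IsOrthProj R → (∀ Q ∈ 𝒮, ProjLE Q R) → ProjLE Qsup R)) ∧
    (∀ Q₁ Q₂ R : H →L[ℂ] H,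
      (IsOrthProj Q₁ ∧ Q₁ * A = P * A) → (IsOrthProj Q₂ ∧ Q₂ * A = P * A) →
      IsOrthProj R → ProjLE Q₁ R → ProjLE R Q₂ →
      IsOrthProj R ∧ R * A = P * A) :=
  QAP_complete_convex_sublattice_general A P
end

section
/- Let G be an undirected graph on vertex set V, and let the separation graphoid be defined by: A ⫫ B | C iff every path in G from a vertex of A to a vertex of B passes through C. Fix j ∈ V and suppose removing j from G leaves connected components with vertex sets G_1, …, G_K. Then for any S ⊆ V \ {j}, the relative Markov boundary satisfies m(j;S) = ⋃_k m(j; S ∩ G_k), and this union is disjoint. -/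
/-!
For any `S`, the Markov boundary `m(j;S)` consists of the vertices of `S` that `j` reaches by a
walk meeting `S` only at its end: this set separates `j` from the rest of `S` (cut any walk at its
first vertex in `S`), and every separating `U ⊆ S` must contain it. When `j ∉ S`, such a walk may
be cut after its last visit to `j`; what remains stays inside the component of its endpoint, so
meeting `S` only at the end is the same as meeting `S ∩ G_k` only at the end.
-/

/-- `C` separates `A` from `B` in `G`: every walk in `G` from a vertex of `A`
to a vertex of `B` passes through a vertex of `C`. -/
def Separates {V : Type*} (G : SimpleGraph V) (A B C : Set V) : Prop :=
  ∀ a ∈ A, ∀ b ∈ B, ∀ p : G.Walk a b, ∃ c ∈ C, c ∈ p.support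

/-- The relative Markov boundary of `j` within `S` for the separation graphoid of `G`:
the smallest `U ⊆ S` such that `U` separates `j` from `S \ U`. -/
def mbSep {V : Type*} (G : SimpleGraph V) (j : V) (S : Set V) : Set V :=
  ⋂₀ {U : Set V | U ⊆ S ∧ Separates G {j} (S \ U) U}

/-- `u` and `v` are connected in `G` by a walk avoiding `j`. -/
def ReachAvoid {V : Type*} (G : SimpleGraph V) (j : V) (u v : V) : Prop :=
  ∃ p : G.Walk u v, j ∉ p.support

section

variable {V : Type*} {G : SimpleGraph V}

namespace SimpleGraph.Walk

theorem exists_walk_firstHit {S : Set V} {a b : V} (p : G.Walk a b) (hb : b ∈ S) :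
    ∃ c ∈ S, ∃ q : G.Walk a c, q.support ⊆ p.support ∧ ∀ v ∈ q.support, v ∈ S → v = c := by
  induction p with
  | nil => exact ⟨_, hb, nil, List.Subset.refl _, by simp⟩
  | @cons a _ _ h p ih =>
    by_cases ha : a ∈ S
    · exact ⟨a, ha, nil, by simp, by simp⟩
    · obtain ⟨c, hc, q, hqp, hqS⟩ := ih hb
      refine ⟨c, hc, cons h q, List.cons_subset_cons _ hqp, ?_⟩
      simp only [support_cons, List.mem_cons]
      rintro v (rfl | hv) hvS
      · exact absurd hvS ha
      · exact hqS v hv hvS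

theorem exists_walk_after_lastVisit {j a s : V} (p : G.Walk a s) (hj : j ∈ p.support) :
    ∃ q : G.Walk j s, q.support ⊆ p.support ∧ ∀ v ∈ q.support, v ≠ j → ReachAvoid G j v s := by
  classical
  induction p with
  | nil =>
    obtain rfl : j = _ := by simpa using hj
    exact ⟨nil, List.Subset.refl _, by simp⟩
  | @cons a _ _ h p ih =>
    by_cases hjp : j ∈ p.support
    · obtain ⟨q, hqp, hq⟩ := ih hjp
      exact ⟨q, List.Subset.trans hqp (List.subset_cons_self _ _), hq⟩
    · obtain rfl : j = a := by simpa [hjp] using hj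
      refine ⟨cons h p, List.Subset.refl _, ?_⟩
      simp only [support_cons, List.mem_cons]
      rintro v (rfl | hv) hvj
      · exact absurd rfl hvj
      · exact ⟨p.dropUntil v hv, fun hjd => hjp (p.support_dropUntil_subset_support hv hjd)⟩

end SimpleGraph.Walk

def firstHits (G : SimpleGraph V) (j : V) (S : Set V) : Set V :=
  {s | s ∈ S ∧ ∃ p : G.Walk j s, ∀ v ∈ p.support, v ∈ S → v = s}

theorem separates_firstHits (j : V) (S : Set V) :
    Separates G {j} (S \ firstHits G j S) (firstHits G j S) := by
  rintro a rfl b ⟨hb, -⟩ p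
  obtain ⟨c, hc, q, hqp, hq⟩ := p.exists_walk_firstHit hb
  exact ⟨c, ⟨hc, q, hq⟩, hqp q.end_mem_support⟩

theorem firstHits_subset_of_separates {j : V} {S U : Set V} (hUS : U ⊆ S)
    (hU : Separates G {j} (S \ U) U) : firstHits G j S ⊆ U := by
  rintro s ⟨hs, p, hp⟩
  by_contra hsU
  obtain ⟨c, hcU, hcp⟩ := hU j rfl s ⟨hs, hsU⟩ p
  exact hsU (hp c hcp (hUS hcU) ▸ hcU)

theorem mbSep_eq_firstHits (G : SimpleGraph V) (j : V) (S : Set V) :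
    mbSep G j S = firstHits G j S := by
  apply Set.Subset.antisymm
  · exact Set.sInter_subset_of_mem ⟨fun _ hs => hs.1, separates_firstHits j S⟩
  · exact Set.subset_sInter fun _ ⟨hUS, hU⟩ => firstHits_subset_of_separates hUS hU

theorem mbSep_subset (G : SimpleGraph V) (j : V) (S : Set V) : mbSep G j S ⊆ S :=
  (mbSep_eq_firstHits G j S).subset.trans fun _ hs => hs.1

section Components

variable {K : Type*} {j : V} {Gs : K → Set V}

theorem mem_of_reachAvoid (hcover : {j}ᶜ ⊆ ⋃ k, Gs k)
    (hsep : ∀ k l, k ≠ l → ∀ u ∈ Gs k, ∀ v ∈ Gs l, ¬ ReachAvoid G j u v)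
    {k : K} {u v : V} (hu : u ≠ j) (hv : v ∈ Gs k) (huv : ReachAvoid G j u v) : u ∈ Gs k := by
  obtain ⟨l, hul⟩ := Set.mem_iUnion.mp (hcover hu)
  obtain rfl : l = k := by_contra fun hlk => hsep l k hlk u hul v hv huv
  exact hul

theorem firstHits_eq_iUnion_inter (hcover : {j}ᶜ ⊆ ⋃ k, Gs k)
    (hsep : ∀ k l, k ≠ l → ∀ u ∈ Gs k, ∀ v ∈ Gs l, ¬ ReachAvoid G j u v)
    {S : Set V} (hjS : j ∉ S) :
    firstHits G j S = ⋃ k, firstHits G j (S ∩ Gs k) := by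
  ext s
  simp only [Set.mem_iUnion]
  constructor
  · rintro ⟨hs, p, hp⟩
    obtain ⟨k, hsk⟩ := Set.mem_iUnion.mp (hcover (ne_of_mem_of_not_mem hs hjS))
    exact ⟨k, ⟨hs, hsk⟩, p, fun v hv hvS => hp v hv hvS.1⟩
  · rintro ⟨k, ⟨hs, hsk⟩, p, hp⟩
    obtain ⟨q, hqp, hq⟩ := p.exists_walk_after_lastVisit p.start_mem_support
    refine ⟨hs, q, fun v hv hvS => hp v (hqp hv) ⟨hvS, ?_⟩⟩
    have hvj : v ≠ j := ne_of_mem_of_not_mem hvS hjS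
    exact mem_of_reachAvoid hcover hsep hvj hsk (hq v hv hvj)

end Components

end

theorem mbSep_eq_iUnion_components_general {V K : Type*} (G : SimpleGraph V) (j : V)
    (Gs : K → Set V)
    (hcover : (⋃ k, Gs k) = ({j}ᶜ : Set V))
    (hdisj : Pairwise (Function.onFun Disjoint Gs))
    (hsep : ∀ k l, k ≠ l → ∀ u ∈ Gs k, ∀ v ∈ Gs l, ¬ ReachAvoid G j u v)
    (S : Set V) (hS : S ⊆ ({j}ᶜ : Set V)) :
    (mbSep G j S = ⋃ k, mbSep G j (S ∩ Gs k)) ∧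
    Pairwise (Function.onFun Disjoint (fun k => mbSep G j (S ∩ Gs k))) := by
  refine ⟨?_, fun k l hkl => ?_⟩
  · simp only [mbSep_eq_firstHits]
    exact firstHits_eq_iUnion_inter hcover.ge hsep fun hj => hS hj rfl
  · exact (hdisj hkl).mono (fun _ hx => (mbSep_subset G j _ hx).2)
      (fun _ hx => (mbSep_subset G j _ hx).2)

/-- If removing `j` from `G` leaves connected components `Gs k`, then
`m(j;S) = ⋃ₖ m(j; S ∩ Gs k)`, and this union is disjoint. -/
theorem mbSep_eq_iUnion_components {V K : Type*} (G : SimpleGraph V) (j : V)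
    (Gs : K → Set V)
    (hcover : (⋃ k, Gs k) = ({j}ᶜ : Set V))
    (hdisj : Pairwise (Function.onFun Disjoint Gs))
    (hconn : ∀ k, ∀ u ∈ Gs k, ∀ v ∈ Gs k, ReachAvoid G j u v)
    (hsep : ∀ k l, k ≠ l → ∀ u ∈ Gs k, ∀ v ∈ Gs l, ¬ ReachAvoid G j u v)
    (S : Set V) (hS : S ⊆ ({j}ᶜ : Set V)) :
    (mbSep G j S = ⋃ k, mbSep G j (S ∩ Gs k)) ∧
    Pairwise (Function.onFun Disjoint (fun k => mbSep G j (S ∩ Gs k))) :=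
  mbSep_eq_iUnion_components_general G j Gs hcover hdisj hsep S hS
end
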